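/- arXiv:2107.00944 — 2 statements merged into one kernel-verified Lean document; each statement's English description precedes it below -/
import Mathlib

section
/- Let D be a commutative Noetherian ring, p a prime ideal of D with a ∉ p, and A = D[X,Y]/(XY - a). Then the quotient A/pA is isomorphic to (D/p)[X,Y]/(XY - ā) where ā is the image of a in D/p, and this ring is a domain. -/
open MvPolynomial

/-- The commutative generalized Weyl algebra of rank 1: `A = D[X,Y]/(XY - a)`. -/
noncomputable abbrev GWA (D : Type*) [CommRing D] (a : D) : Type _ :=
  MvPolynomial (Fin 2) D ⧸ (Ideal.span {X 0 * X 1 - C a} : Ideal (MvPolynomial (Fin 2) D))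

/-!
Both sides of the isomorphism are `D[X,Y]` modulo `p D[X,Y] + (XY - a)`, taken in the two possible
orders, and `D[X,Y] / p D[X,Y] = (D/p)[X,Y]`.

For the domain property put `k = D/p`, a domain in which `ā ≠ 0`. Using `XY = ā`, every element of
`k[X,Y]/(XY - ā)` can be written as `u(X) + Y v(Y)`. Under `X ↦ T`, `Y ↦ ā T⁻¹` into the Laurent
polynomials this goes to `u(T) + ā T⁻¹ v(ā T⁻¹)`, whose part of nonnegative degree is `u` and whose
remaining part vanishes only if `v = 0`, as `ā` is not a zero divisor. Hence the map is injective
and `k[X,Y]/(XY - ā)` is a subring of the domain `k[T,T⁻¹]`.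
-/

namespace Polynomial

variable {R B : Type*} [CommRing R] [CommRing B] [Algebra R B] {a : R} {x y : B}

theorem fst_mul_aeval_add_mul_aeval (hxy : x * y = algebraMap R B a) (u v : R[X]) :
    x * (aeval x u + y * aeval y v) =
      aeval x (X * u + C (a * v.coeff 0)) + y * aeval y (C a * v.divX) := by
  have hv := congrArg (aeval y) v.divX_mul_X_add
  simp only [map_add, map_mul, Polynomial.aeval_X, Polynomial.aeval_C] at hv ⊢
  linear_combination aeval y v * hxy - algebraMap R B a * hv

theorem snd_mul_aeval_add_mul_aeval (hxy : x * y = algebraMap R B a) (u v : R[X]) :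
    y * (aeval x u + y * aeval y v) =
      aeval x (C a * u.divX) + y * aeval y (C (u.coeff 0) + X * v) := by
  have hu := congrArg (aeval x) u.divX_mul_X_add
  simp only [map_add, map_mul, Polynomial.aeval_X, Polynomial.aeval_C] at hu ⊢
  linear_combination aeval x u.divX * hxy - y * hu

end Polynomial

namespace LaurentPolynomial

variable {R : Type*} [CommRing R]

theorem trunc_C_mul_T_neg_one_mul_aeval (b : R) (v : Polynomial R) :
    trunc (C b * T (-1) * Polynomial.aeval (C b * T (-1)) v) = 0 := by
  induction v using Polynomial.induction_on' with
  | add p q hp hq => rw [map_add, mul_add, map_add, hp, hq, add_zero]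
  | monomial n r =>
    have : C b * T (-1) * Polynomial.aeval (C b * T (-1)) (Polynomial.monomial n r) =
        C (r * b ^ (n + 1)) * T (-(n + 1 : ℕ)) := by
      rw [Polynomial.aeval_monomial, ← C_eq_algebraMap, mul_left_comm, ← pow_succ', mul_pow,
        ← map_pow, T_pow, ← mul_assoc, ← map_mul]
      simp
    rw [this, trunc_C_mul_T, if_neg (by omega)]

theorem aeval_T_one (u : Polynomial R) : Polynomial.aeval (T 1) u = Polynomial.toLaurent u := by
  rw [← Polynomial.toLaurent_X, ← Polynomial.coe_toLaurentAlg, Polynomial.aeval_algHom_apply,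
    Polynomial.aeval_X_left_apply]

theorem aeval_C_mul_T_neg_one_eq_zero_iff {b : R} (hb : b ∈ nonZeroDivisors R) (v : Polynomial R) :
    Polynomial.aeval (C b * T (-1)) v = 0 ↔ v = 0 := by
  have : invert (C b * T (-1)) = Polynomial.toLaurentAlg (Polynomial.C b * Polynomial.X) := by
    simp
  rw [← (invert (R := R)).injective.eq_iff, map_zero, ← Polynomial.aeval_algHom_apply, this,
    Polynomial.aeval_algHom_apply, Polynomial.toLaurentAlg_apply, Polynomial.toLaurent_eq_zero,
    ← Polynomial.comp_eq_aeval, Polynomial.comp_C_mul_X_eq_zero_iff hb]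

end LaurentPolynomial

namespace MvPolynomial

variable {σ R : Type*} [CommRing R]

theorem quotientEquivQuotientMvPolynomial_symm_mk (I : Ideal R) (f : MvPolynomial σ R) :
    (quotientEquivQuotientMvPolynomial I).symm (Ideal.Quotient.mk _ f) =
      map (Ideal.Quotient.mk I) f := by
  rw [AlgEquiv.symm_apply_eq]
  induction f using MvPolynomial.induction_on <;> simp_all [quotientEquivQuotientMvPolynomial]

theorem map_algebraMap_quotient_eq_map_map_C (J : Ideal (MvPolynomial σ R)) (I : Ideal R) :
    I.map (algebraMap R (MvPolynomial σ R ⧸ J)) = (I.map C).map (Ideal.Quotient.mk J) := by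
  rw [Ideal.map_map]
  rfl

theorem map_map_quotientEquivQuotientMvPolynomial_symm (f : MvPolynomial σ R) (I : Ideal R) :
    ((Ideal.span {f}).map (Ideal.Quotient.mk (I.map C))).map
        (quotientEquivQuotientMvPolynomial I).symm.toRingEquiv =
      Ideal.span {map (Ideal.Quotient.mk I) f} := by
  rw [Ideal.map_span, Ideal.map_span, Set.image_singleton, Set.image_singleton]
  exact congrArg (fun g => Ideal.span {g}) (quotientEquivQuotientMvPolynomial_symm_mk I f)

noncomputable def quotientSpanSingletonQuotientMapEquiv (f : MvPolynomial σ R) (I : Ideal R) :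
    (MvPolynomial σ R ⧸ Ideal.span {f}) ⧸ I.map (algebraMap R (MvPolynomial σ R ⧸ Ideal.span {f}))
      ≃+* MvPolynomial σ (R ⧸ I) ⧸ Ideal.span {map (Ideal.Quotient.mk I) f} :=
  (Ideal.quotEquivOfEq (map_algebraMap_quotient_eq_map_map_C _ I)).trans <|
    (DoubleQuot.quotQuotEquivComm _ _).trans <|
      Ideal.quotientEquiv _ _ _ (map_map_quotientEquivQuotientMvPolynomial_symm f I).symm

end MvPolynomial

namespace GWA

variable {R : Type*} [CommRing R] (a : R)

theorem mk_X_zero_mul_mk_X_one :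
    (Ideal.Quotient.mk _ (X 0) : GWA R a) * Ideal.Quotient.mk _ (X 1) = algebraMap R _ a := by
  rw [← map_mul, ← Ideal.Quotient.mk_algebraMap, Ideal.Quotient.eq]
  exact Ideal.subset_span rfl

theorem exists_eq_aeval_add_mul_aeval (z : GWA R a) :
    ∃ u v : Polynomial R, z = Polynomial.aeval (Ideal.Quotient.mk _ (X 0)) u +
      Ideal.Quotient.mk _ (X 1) * Polynomial.aeval (Ideal.Quotient.mk _ (X 1)) v := by
  obtain ⟨P, rfl⟩ := Ideal.Quotient.mk_surjective z
  induction P using MvPolynomial.induction_on with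
  | C r =>
    refine ⟨Polynomial.C r, 0, ?_⟩
    simp only [Polynomial.aeval_C, map_zero, mul_zero, add_zero]
    rfl
  | add P Q hP hQ =>
    obtain ⟨u₁, v₁, h₁⟩ := hP
    obtain ⟨u₂, v₂, h₂⟩ := hQ
    exact ⟨u₁ + u₂, v₁ + v₂, by rw [map_add, h₁, h₂]; simp only [map_add]; ring⟩
  | mul_X P i hP =>
    obtain ⟨u, v, h⟩ := hP
    rw [map_mul, h, mul_comm]
    fin_cases i
    · exact ⟨_, _, Polynomial.fst_mul_aeval_add_mul_aeval (mk_X_zero_mul_mk_X_one a) u v⟩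
    · exact ⟨_, _, Polynomial.snd_mul_aeval_add_mul_aeval (mk_X_zero_mul_mk_X_one a) u v⟩

open LaurentPolynomial in
noncomputable def toLaurent : GWA R a →ₐ[R] LaurentPolynomial R :=
  Ideal.Quotient.liftₐ _ (aeval ![T 1, LaurentPolynomial.C a * T (-1)]) fun f hf => by
    obtain ⟨g, rfl⟩ := Ideal.mem_span_singleton'.mp hf
    rw [map_mul, map_sub, map_mul]
    simp

@[simp]
theorem toLaurent_mk_X_zero : toLaurent a (Ideal.Quotient.mk _ (X 0)) = LaurentPolynomial.T 1 := by
  change aeval _ (X 0) = _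
  simp

@[simp]
theorem toLaurent_mk_X_one :
    toLaurent a (Ideal.Quotient.mk _ (X 1)) = LaurentPolynomial.C a * LaurentPolynomial.T (-1) := by
  change aeval _ (X 1) = _
  simp

noncomputable def quotientMapEquiv (p : Ideal R) :
    (GWA R a ⧸ p.map (algebraMap R (GWA R a))) ≃+* GWA (R ⧸ p) (Ideal.Quotient.mk p a) :=
  (quotientSpanSingletonQuotientMapEquiv _ p).trans (Ideal.quotEquivOfEq (by simp))

variable {a} [IsDomain R]

open LaurentPolynomial in
theorem toLaurent_injective (ha : a ≠ 0) : Function.Injective (toLaurent a) := by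
  refine (injective_iff_map_eq_zero _).mpr fun z hz => ?_
  obtain ⟨u, v, rfl⟩ := exists_eq_aeval_add_mul_aeval a z
  simp only [map_add, map_mul, ← Polynomial.aeval_algHom_apply, toLaurent_mk_X_zero,
    toLaurent_mk_X_one] at hz
  obtain rfl : u = 0 := by
    simpa [aeval_T_one, trunc_C_mul_T_neg_one_mul_aeval] using congrArg trunc hz
  have hCT : LaurentPolynomial.C a * T (-1) ≠ 0 :=
    mul_ne_zero (by simpa [← Polynomial.toLaurent_C] using ha) (isUnit_T _).ne_zero
  rw [map_zero, zero_add, mul_eq_zero, or_iff_right hCT,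
    aeval_C_mul_T_neg_one_eq_zero_iff (mem_nonZeroDivisors_of_ne_zero ha)] at hz
  simp [hz]

theorem isDomain (ha : a ≠ 0) : IsDomain (GWA R a) :=
  (toLaurent_injective ha).isDomain

end GWA

theorem gwa_quotient_map_iso_general (D : Type*) [CommRing D] (a : D)
    (p : Ideal D) (hp : p.IsPrime) (ha : a ∉ p) :
    Nonempty
      ((GWA D a ⧸ p.map (algebraMap D (GWA D a))) ≃+*
        GWA (D ⧸ p) (Ideal.Quotient.mk p a)) ∧
    IsDomain (GWA D a ⧸ p.map (algebraMap D (GWA D a))) := by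
  let e := GWA.quotientMapEquiv a p
  have : IsDomain (GWA (D ⧸ p) (Ideal.Quotient.mk p a)) :=
    GWA.isDomain (by rwa [Ne, Ideal.Quotient.eq_zero_iff_mem])
  exact ⟨⟨e⟩, e.toMulEquiv.isDomain _⟩

/-- If `p` is a prime ideal of the commutative Noetherian ring `D` with `a ∉ p`, then
`A/pA ≅ (D/p)[X,Y]/(XY - ā)` where `ā` is the image of `a` in `D/p`, and this ring
is a domain. -/
theorem gwa_quotient_map_iso (D : Type*) [CommRing D] [IsNoetherianRing D] (a : D)
    (p : Ideal D) (hp : p.IsPrime) (ha : a ∉ p) :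
    Nonempty
      ((GWA D a ⧸ p.map (algebraMap D (GWA D a))) ≃+*
        GWA (D ⧸ p) (Ideal.Quotient.mk p a)) ∧
    IsDomain (GWA D a ⧸ p.map (algebraMap D (GWA D a))) :=
  gwa_quotient_map_iso_general D a p hp ha
end

section
/- Let D be a commutative Noetherian ring and A = D[X,Y]/(XY - a). Then the number of minimal primes of A is at least the number of minimal primes of D, with equality if and only if a lies in no minimal prime of D. -/
open MvPolynomial

/-!
The map `D → A` is injective (`x ↦ 1, y ↦ a` is a retraction), so every minimal prime of `D`
lies under a minimal prime of `A`; this gives the inequality. Every element of `A` can be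
written `c + x P(x) + y Q(y)`, and the fibre over a minimal prime `p` of `D` decides the rest.
If `a ∈ p`, the kernels of `x ↦ 0, y ↦ T` and `x ↦ T, y ↦ 0` into `(D/p)[T]` are two distinct
minimal primes over `p`: the first lies in `pA + (x)`, and a prime below it contains
`pA ∋ xy` but not `y`, hence contains `x`. If `a ∉ p`, the map `x ↦ T, y ↦ ā T⁻¹` into the
domain `(D/p)[T, T⁻¹]` has kernel exactly `pA`, since `x P(x)` and `y Q(y)` go to
nonnegative and negative degrees; so `pA` is prime over `p`, and when no minimal prime
contains `a` every minimal prime of `A` is such a `pA`.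
-/

theorem Set.ncard_lt_ncard_of_subset_image {α β : Type*} {f : α → β} {s : Set α} {t : Set β}
    (hs : s.Finite) (ht : t ⊆ f '' s) {a₁ a₂ : α} (h₁ : a₁ ∈ s) (h₂ : a₂ ∈ s)
    (hne : a₁ ≠ a₂) (heq : f a₁ = f a₂) : t.ncard < s.ncard := by
  have ht' : t ⊆ f '' (s \ {a₁}) := by
    rintro b hb
    obtain ⟨c, hc, rfl⟩ := ht hb
    by_cases hca : c = a₁
    · subst hca
      exact ⟨a₂, ⟨h₂, hne.symm⟩, heq.symm⟩
    · exact ⟨c, ⟨hc, hca⟩, rfl⟩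
  calc t.ncard ≤ (f '' (s \ {a₁})).ncard := Set.ncard_le_ncard ht' ((hs.sdiff).image f)
    _ ≤ (s \ {a₁}).ncard := Set.ncard_image_le hs.sdiff
    _ < s.ncard := Set.ncard_sdiff_singleton_lt_of_mem h₁ hs

theorem Polynomial.C_add_X_mul_eq_zero {R : Type*} [Semiring R] {c : R} {P : Polynomial R} :
    C c + X * P = 0 ↔ c = 0 ∧ P = 0 := by
  refine ⟨fun h => ?_, fun ⟨hc, hP⟩ => by rw [hc, hP, map_zero, mul_zero, add_zero]⟩
  have hc : c = 0 := by simpa using congrArg (coeff · 0) h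
  subst hc
  exact ⟨rfl, isRegular_X.left (by simpa using h)⟩

namespace LaurentPolynomial

open Polynomial

theorem trunc_invert_toLaurent {R : Type*} [CommSemiring R] (f : R[X]) :
    trunc (invert (toLaurent f)) = Polynomial.C (f.coeff 0) := by
  induction f using Polynomial.induction_on' with
  | add f g hf hg => rw [map_add, map_add, map_add, hf, hg, Polynomial.coeff_add, map_add]
  | monomial n r =>
    rw [← Polynomial.C_mul_X_pow_eq_monomial, map_mul, Polynomial.toLaurent_C,
      Polynomial.toLaurent_X_pow, map_mul, invert_C, invert_T, trunc_C_mul_T,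
      Polynomial.coeff_C_mul_X_pow]
    rcases n.eq_zero_or_pos with rfl | hn
    · simp
    · simp [hn.ne, hn.ne']

theorem eq_zero_of_toLaurent_add_invert_X_mul_eq_zero {R : Type*} [CommSemiring R]
    {f g : R[X]} (h : toLaurent f + invert (toLaurent (Polynomial.X * g)) = 0) :
    f = 0 ∧ g = 0 := by
  have hf := congrArg trunc h
  rw [map_add, Polynomial.trunc_toLaurent, trunc_invert_toLaurent, Polynomial.coeff_X_mul_zero,
    map_zero, add_zero, map_zero] at hf
  subst hf
  rw [map_zero, zero_add, map_eq_zero_iff _ invert.injective,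
    Polynomial.toLaurent_eq_zero] at h
  exact ⟨rfl, Polynomial.isRegular_X.left (h.trans (mul_zero _).symm)⟩

end LaurentPolynomial

theorem Polynomial.toLaurent_comp {S : Type*} [CommSemiring S] (f q : Polynomial S) :
    Polynomial.toLaurent (f.comp q) = Polynomial.aeval (Polynomial.toLaurent q) f := by
  simp only [Polynomial.comp_eq_aeval, ← Polynomial.toLaurentAlg_apply,
    ← Polynomial.aeval_algHom_apply]

section Algebra

variable {R A : Type*} [CommRing R] [CommRing A] [Algebra R A] {p : Ideal R}

open Polynomial in
theorem Polynomial.aeval_mem_map_of_map_eq_zero {Q : R[X]} (hQ : Q.map (Ideal.Quotient.mk p) = 0)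
    (v : A) : aeval v Q ∈ p.map (algebraMap R A) := by
  have hQ : Q ∈ p.map (Polynomial.C : R →+* R[X]) := by
    rwa [← Ideal.mk_ker (I := p), ← Polynomial.ker_mapRingHom, RingHom.mem_ker]
  have := Ideal.mem_map_of_mem (aeval v).toRingHom hQ
  rwa [Ideal.map_map, ← Polynomial.algebraMap_eq, AlgHom.toRingHom_eq_coe,
    AlgHom.comp_algebraMap] at this

theorem Ideal.mem_minimalPrimes_of_le_map_sup_span (hp : p ∈ minimalPrimes R) {K : Ideal A}
    [K.IsPrime] (hK : K.comap (algebraMap R A) = p) {u v : A}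
    (huv : u * v ∈ p.map (algebraMap R A)) (hle : K ≤ p.map (algebraMap R A) ⊔ Ideal.span {u})
    (hv : v ∉ K) : K ∈ minimalPrimes A := by
  refine ⟨⟨‹_›, bot_le⟩, fun Q ⟨hQ, _⟩ hQK => ?_⟩
  have hpQ : p.map (algebraMap R A) ≤ Q :=
    Ideal.map_le_iff_le_comap.2 (hp.2 ⟨hQ.comap _, bot_le⟩ (hK ▸ Ideal.comap_mono hQK))
  have hu : u ∈ Q := (hQ.mem_or_mem (hpQ huv)).resolve_right fun h => hv (hQK h)
  exact hle.trans (sup_le hpQ ((Ideal.span_singleton_le_iff_mem _).2 hu))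

theorem Ideal.comap_mem_minimalPrimes_and_map_comap_eq {P : Ideal A} (hP : P ∈ minimalPrimes A)
    (h : ∀ q ∈ minimalPrimes R,
      (q.map (algebraMap R A)).IsPrime ∧ (q.map (algebraMap R A)).comap (algebraMap R A) = q) :
    P.comap (algebraMap R A) ∈ minimalPrimes R ∧
      (P.comap (algebraMap R A)).map (algebraMap R A) = P := by
  have := hP.1.1
  obtain ⟨q, hq, hqP⟩ :=
    Ideal.exists_minimalPrimes_le (bot_le : ⊥ ≤ P.comap (algebraMap R A))
  have hmap : q.map (algebraMap R A) ≤ P := Ideal.map_le_iff_le_comap.2 hqP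
  have hPq : P = q.map (algebraMap R A) := le_antisymm (hP.2 ⟨(h q hq).1, bot_le⟩ hmap) hmap
  rw [hPq, (h q hq).2]
  exact ⟨hq, rfl⟩

theorem Ideal.comap_algebraMap_ker_eq {B : Type*} [CommRing B] [Algebra R B] [Algebra (R ⧸ p) B]
    [IsScalarTower R (R ⧸ p) B] (hB : Function.Injective (algebraMap (R ⧸ p) B))
    (φ : A →ₐ[R] B) : (RingHom.ker φ).comap (algebraMap R A) = p := by
  ext d
  rw [Ideal.mem_comap, RingHom.mem_ker, φ.commutes, IsScalarTower.algebraMap_apply R (R ⧸ p) B,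
    map_eq_zero_iff _ hB, Ideal.Quotient.algebraMap_eq, Ideal.Quotient.eq_zero_iff_mem]

end Algebra

namespace GWA

section NormalForm

variable {R A : Type*} [CommRing R] [CommRing A] [Algebra R A]

noncomputable def normalForm (u v : A) (c : R) (P Q : Polynomial R) : A :=
  algebraMap R A c + u * Polynomial.aeval u P + v * Polynomial.aeval v Q

theorem normalForm_comm (u v : A) (c : R) (P Q : Polynomial R) :
    normalForm u v c P Q = normalForm v u c Q P :=
  add_right_comm _ _ _

theorem normalForm_mul_left {a : R} {u v : A} (huv : u * v = algebraMap R A a) (c : R)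
    (P Q : Polynomial R) :
    normalForm u v c P Q * u = normalForm u v (a * Q.coeff 0) (Polynomial.C c + Polynomial.X * P)
      (Polynomial.C a * Q.divX) := by
  have hQ : Polynomial.aeval v Q = algebraMap R A (Q.coeff 0) + v * Polynomial.aeval v Q.divX := by
    conv_lhs => rw [← Polynomial.X_mul_divX_add Q]
    simp only [map_add, map_mul, Polynomial.aeval_X, Polynomial.aeval_C, add_comm]
  simp only [normalForm, map_add, map_mul, Polynomial.aeval_C, Polynomial.aeval_X]
  linear_combination Polynomial.aeval v Q * huv + algebraMap R A a * hQ

theorem ker_le_map_sup_span {p : Ideal R} (φ : A →ₐ[R] Polynomial (R ⧸ p)) {u v : A}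
    (hu : φ u = 0) (hv : φ v = Polynomial.X)
    (hspan : ∀ F : A, ∃ (c : R) (P Q : Polynomial R), F = normalForm u v c P Q) :
    RingHom.ker φ ≤ p.map (algebraMap R A) ⊔ Ideal.span {u} := by
  intro F hF
  obtain ⟨c, P, Q, rfl⟩ := hspan F
  have hφ : Polynomial.C (Ideal.Quotient.mk p c)
      + Polynomial.X * Q.map (Ideal.Quotient.mk p) = 0 := by
    rw [RingHom.mem_ker, normalForm] at hF
    simpa [← Polynomial.aeval_algHom_apply, hu, hv, ← Ideal.Quotient.algebraMap_eq,
      Polynomial.algebraMap_apply, ← Polynomial.aeval_map_algebraMap (R ⧸ p),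
      Polynomial.aeval_X_left_apply] using hF
  obtain ⟨hc, hQ⟩ := Polynomial.C_add_X_mul_eq_zero.1 hφ
  refine add_mem (add_mem ?_ ?_) ?_
  · exact Ideal.mem_sup_left (Ideal.mem_map_of_mem _ (Ideal.Quotient.eq_zero_iff_mem.1 hc))
  · exact Ideal.mem_sup_right (Ideal.mul_mem_right _ _ (Ideal.mem_span_singleton_self u))
  · exact Ideal.mem_sup_left
      (Ideal.mul_mem_left _ _ (Polynomial.aeval_mem_map_of_map_eq_zero hQ v))

theorem map_normalForm {B : Type*} [CommRing B] [Algebra R B] (φ : A →ₐ[R] B) (u v : A) (c : R)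
    (P Q : Polynomial R) : φ (normalForm u v c P Q) = normalForm (φ u) (φ v) c P Q := by
  simp only [normalForm, map_add, map_mul, AlgHom.commutes, Polynomial.aeval_algHom_apply]

theorem normalForm_map_algebraMap {S : Type*} [CommRing S] [Algebra R S] [Algebra S A]
    [IsScalarTower R S A] (u v : A) (c : R) (P Q : Polynomial R) :
    normalForm u v c P Q = normalForm u v (algebraMap R S c) (P.map (algebraMap R S))
      (Q.map (algebraMap R S)) := by
  simp only [normalForm, Polynomial.aeval_map_algebraMap, ← IsScalarTower.algebraMap_apply]

theorem ker_mem_minimalPrimes {p : Ideal R} (hp : p ∈ minimalPrimes R)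
    (φ : A →ₐ[R] Polynomial (R ⧸ p)) {u v : A} (hu : φ u = 0) (hv : φ v = Polynomial.X)
    (hspan : ∀ F : A, ∃ (c : R) (P Q : Polynomial R), F = normalForm u v c P Q)
    (huv : u * v ∈ p.map (algebraMap R A)) :
    RingHom.ker φ ∈ minimalPrimes A ∧ (RingHom.ker φ).comap (algebraMap R A) = p := by
  have := hp.1.1
  have := RingHom.ker_isPrime φ
  have hK := Ideal.comap_algebraMap_ker_eq
    (FaithfulSMul.algebraMap_injective (R ⧸ p) (Polynomial (R ⧸ p))) φ
  refine ⟨Ideal.mem_minimalPrimes_of_le_map_sup_span hp hK huv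
    (ker_le_map_sup_span φ hu hv hspan) ?_, hK⟩
  rw [RingHom.mem_ker, hv]
  exact Polynomial.X_ne_zero

theorem normalForm_T_one_C_mul_T_neg_one {S : Type*} [CommRing S] (b c : S)
    (P Q : Polynomial S) :
    normalForm (LaurentPolynomial.T 1) (LaurentPolynomial.C b * LaurentPolynomial.T (-1)) c P Q =
      Polynomial.toLaurent (Polynomial.C c + Polynomial.X * P) +
        LaurentPolynomial.invert (Polynomial.toLaurent
          (Polynomial.X * (Polynomial.C b * Q.comp (Polynomial.C b * Polynomial.X)))) := by
  have hP : Polynomial.aeval (LaurentPolynomial.T 1) P = Polynomial.toLaurent P := by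
    rw [← Polynomial.comp_X (p := P), Polynomial.toLaurent_comp, Polynomial.toLaurent_X,
      Polynomial.comp_X]
  have hQ : LaurentPolynomial.invert (Polynomial.toLaurent (Q.comp (Polynomial.C b * Polynomial.X)))
      = Polynomial.aeval (LaurentPolynomial.C b * LaurentPolynomial.T (-1)) Q := by
    rw [Polynomial.toLaurent_comp, ← Polynomial.aeval_algHom_apply]
    simp
  simp only [normalForm, map_add, map_mul, hP, ← hQ, Polynomial.toLaurent_C,
    Polynomial.toLaurent_X, LaurentPolynomial.invert_C, LaurentPolynomial.invert_T,
    ← LaurentPolynomial.C_eq_algebraMap]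
  ring

end NormalForm

variable {D : Type*} [CommRing D] (a : D)

noncomputable def x : GWA D a := Ideal.Quotient.mk _ (X 0)

noncomputable def y : GWA D a := Ideal.Quotient.mk _ (X 1)

theorem x_mul_y : x a * y a = algebraMap D (GWA D a) a := by
  rw [x, y, ← map_mul, ← Ideal.Quotient.mk_algebraMap, MvPolynomial.algebraMap_eq,
    ← sub_eq_zero, ← map_sub, Ideal.Quotient.eq_zero_iff_mem]
  exact Ideal.subset_span rfl

variable {a} {S : Type*} [CommRing S] [Algebra D S]

noncomputable def lift (u v : S) (h : u * v = algebraMap D S a) : GWA D a →ₐ[D] S :=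
  Ideal.Quotient.liftₐ _ (aeval ![u, v]) fun F hF => by
    obtain ⟨G, rfl⟩ := Ideal.mem_span_singleton'.1 hF
    simp [h]

theorem lift_mk (u v : S) (h : u * v = algebraMap D S a) (F : MvPolynomial (Fin 2) D) :
    lift u v h (Ideal.Quotient.mk _ F) = aeval ![u, v] F :=
  rfl

@[simp] theorem lift_x (u v : S) (h : u * v = algebraMap D S a) : lift u v h (x a) = u := by
  simp [x, lift_mk]

@[simp] theorem lift_y (u v : S) (h : u * v = algebraMap D S a) : lift u v h (y a) = v := by
  simp [y, lift_mk]

theorem exists_normalForm (F : GWA D a) :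
    ∃ (c : D) (P Q : Polynomial D), F = normalForm (x a) (y a) c P Q := by
  obtain ⟨G, rfl⟩ := Ideal.Quotient.mk_surjective F
  induction G using MvPolynomial.induction_on with
  | C d => exact ⟨d, 0, 0, by simp [normalForm, ← Ideal.Quotient.mk_algebraMap]⟩
  | add G H hG hH =>
    obtain ⟨c, P, Q, hG⟩ := hG
    obtain ⟨c', P', Q', hH⟩ := hH
    refine ⟨c + c', P + P', Q + Q', ?_⟩
    simp only [map_add, hG, hH, normalForm, mul_add]
    ring
  | mul_X G i hG =>
    obtain ⟨c, P, Q, hG⟩ := hG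
    rw [map_mul, hG]
    match i with
    | 0 => exact ⟨a * Q.coeff 0, _, _, normalForm_mul_left (x_mul_y a) c P Q⟩
    | 1 =>
      refine ⟨a * P.coeff 0, Polynomial.C a * P.divX, Polynomial.C c + Polynomial.X * Q, ?_⟩
      rw [normalForm_comm]
      exact (normalForm_mul_left ((mul_comm _ _).trans (x_mul_y a)) c Q P).trans
        (normalForm_comm _ _ _ _ _)

theorem algebraMap_injective : Function.Injective (algebraMap D (GWA D a)) :=
  Function.LeftInverse.injective (g := lift (1 : D) a (by simp)) fun d => by simp

theorem minimalPrimes_subset_image_comap :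
    minimalPrimes D ⊆ Ideal.comap (algebraMap D (GWA D a)) '' minimalPrimes (GWA D a) := by
  have := Ideal.minimalPrimes_comap_subset (algebraMap D (GWA D a)) ⊥
  rwa [Ideal.comap_bot_of_injective _ algebraMap_injective] at this

theorem exists_ne_mem_minimalPrimes_comap_eq {p : Ideal D} (hp : p ∈ minimalPrimes D)
    (ha : a ∈ p) : ∃ K₁ ∈ minimalPrimes (GWA D a), ∃ K₂ ∈ minimalPrimes (GWA D a), K₁ ≠ K₂ ∧
      Ideal.comap (algebraMap D (GWA D a)) K₁ = Ideal.comap (algebraMap D (GWA D a)) K₂ := by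
  have := hp.1.1
  have ha' : algebraMap D (Polynomial (D ⧸ p)) a = 0 := by
    rw [IsScalarTower.algebraMap_apply D (D ⧸ p), Ideal.Quotient.algebraMap_eq,
      Ideal.Quotient.eq_zero_iff_mem.2 ha, map_zero]
  let φ₁ := lift (a := a) (0 : Polynomial (D ⧸ p)) Polynomial.X (by rw [zero_mul, ha'])
  let φ₂ := lift (a := a) Polynomial.X (0 : Polynomial (D ⧸ p)) (by rw [mul_zero, ha'])
  have hxy : x a * y a ∈ p.map (algebraMap D (GWA D a)) := x_mul_y a ▸ Ideal.mem_map_of_mem _ ha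
  obtain ⟨h₁, hc₁⟩ :=
    ker_mem_minimalPrimes hp φ₁ (lift_x ..) (lift_y ..) exists_normalForm hxy
  have hspan (F : GWA D a) : ∃ (c : D) (P Q : Polynomial D), F = normalForm (y a) (x a) c P Q :=
    let ⟨c, P, Q, h⟩ := exists_normalForm F
    ⟨c, Q, P, h.trans (normalForm_comm ..)⟩
  obtain ⟨h₂, hc₂⟩ := ker_mem_minimalPrimes hp φ₂ (lift_y ..) (lift_x ..) hspan
    (mul_comm (x a) (y a) ▸ hxy)
  refine ⟨_, h₁, _, h₂, fun h => ?_, hc₁.trans hc₂.symm⟩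
  have hx : x a ∈ RingHom.ker φ₂ := h ▸ (RingHom.mem_ker.2 (lift_x ..))
  rw [RingHom.mem_ker, lift_x] at hx
  exact Polynomial.X_ne_zero hx

section Laurent

variable {p : Ideal D}

noncomputable def laurent (p : Ideal D) : GWA D a →ₐ[D] LaurentPolynomial (D ⧸ p) :=
  lift (LaurentPolynomial.T 1)
    (LaurentPolynomial.C (algebraMap D (D ⧸ p) a) * LaurentPolynomial.T (-1)) (by
      rw [mul_left_comm, ← LaurentPolynomial.T_add, add_neg_cancel, LaurentPolynomial.T_zero,
        mul_one, LaurentPolynomial.algebraMap_apply])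

theorem comap_ker_laurent : (RingHom.ker (laurent (a := a) p)).comap (algebraMap D (GWA D a)) = p :=
  Ideal.comap_algebraMap_ker_eq
    (FaithfulSMul.algebraMap_injective (D ⧸ p) (LaurentPolynomial (D ⧸ p))) _

theorem ker_laurent [p.IsPrime] (ha : a ∉ p) :
    RingHom.ker (laurent (a := a) p) = p.map (algebraMap D (GWA D a)) := by
  refine le_antisymm (fun F hF => ?_) (Ideal.map_le_iff_le_comap.2 comap_ker_laurent.ge)
  obtain ⟨c, P, Q, rfl⟩ := exists_normalForm F
  rw [RingHom.mem_ker, map_normalForm, laurent, lift_x, lift_y,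
    normalForm_map_algebraMap (S := D ⧸ p),
    normalForm_T_one_C_mul_T_neg_one] at hF
  obtain ⟨h₁, h₂⟩ := LaurentPolynomial.eq_zero_of_toLaurent_add_invert_X_mul_eq_zero hF
  obtain ⟨hc, hP⟩ := Polynomial.C_add_X_mul_eq_zero.1 h₁
  have hb : Ideal.Quotient.mk p a ≠ 0 := fun h => ha (Ideal.Quotient.eq_zero_iff_mem.1 h)
  have hQ : Q.map (Ideal.Quotient.mk p) = 0 := by
    simpa [Polynomial.comp_eq_zero_iff, hb] using h₂
  rw [Ideal.Quotient.algebraMap_eq] at hc hP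
  exact add_mem (add_mem (Ideal.mem_map_of_mem _ (Ideal.Quotient.eq_zero_iff_mem.1 hc))
    (Ideal.mul_mem_left _ _ (Polynomial.aeval_mem_map_of_map_eq_zero hP _)))
    (Ideal.mul_mem_left _ _ (Polynomial.aeval_mem_map_of_map_eq_zero hQ _))

theorem isPrime_map_algebraMap [p.IsPrime] (ha : a ∉ p) :
    (p.map (algebraMap D (GWA D a))).IsPrime :=
  ker_laurent ha ▸ RingHom.ker_isPrime _

theorem comap_map_algebraMap [p.IsPrime] (ha : a ∉ p) :
    (p.map (algebraMap D (GWA D a))).comap (algebraMap D (GWA D a)) = p := by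
  rw [← ker_laurent ha, comap_ker_laurent]

end Laurent

end GWA

/-- For a commutative Noetherian ring `D` and `A = D[X,Y]/(XY - a)`, the number of
minimal primes of `A` is at least the number of minimal primes of `D`, with equality
iff `a` lies in no minimal prime of `D`. -/
theorem gwa_card_minimalPrimes (D : Type*) [CommRing D] [IsNoetherianRing D] (a : D) :
    (minimalPrimes D).ncard ≤ (minimalPrimes (GWA D a)).ncard ∧
    ((minimalPrimes (GWA D a)).ncard = (minimalPrimes D).ncard ↔
      ∀ p ∈ minimalPrimes D, a ∉ p) := by
  set ι := algebraMap D (GWA D a)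
  have hfinA : (minimalPrimes (GWA D a)).Finite := minimalPrimes.finite_of_isNoetherianRing _
  have hfinD : (minimalPrimes D).Finite := minimalPrimes.finite_of_isNoetherianRing _
  have hcover := GWA.minimalPrimes_subset_image_comap (a := a)
  have hle : (minimalPrimes D).ncard ≤ (minimalPrimes (GWA D a)).ncard :=
    (Set.ncard_le_ncard hcover (hfinA.image _)).trans (Set.ncard_image_le hfinA)
  refine ⟨hle, fun heq p hp ha => ?_, fun hnot => le_antisymm ?_ hle⟩
  · obtain ⟨K₁, h₁, K₂, h₂, hne, hc⟩ := GWA.exists_ne_mem_minimalPrimes_comap_eq hp ha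
    exact (Set.ncard_lt_ncard_of_subset_image hfinA hcover h₁ h₂ hne hc).ne' heq
  · have hmap (q) (hq : q ∈ minimalPrimes D) : (q.map ι).IsPrime ∧ (q.map ι).comap ι = q :=
      have := hq.1.1
      ⟨GWA.isPrime_map_algebraMap (hnot q hq), GWA.comap_map_algebraMap (hnot q hq)⟩
    have hmin {P} (hP : P ∈ minimalPrimes (GWA D a)) :=
      Ideal.comap_mem_minimalPrimes_and_map_comap_eq hP hmap
    exact Set.ncard_le_ncard_of_injOn (Ideal.comap ι) (fun P hP => (hmin hP).1)
      (fun P₁ h₁ P₂ h₂ h => by rw [← (hmin h₁).2, ← (hmin h₂).2, h])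
      hfinD
end
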